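/- Assume m is not constant on [0,1] and m' changes sign at most finitely many times on [0,1], i.e. there exists a partition 0 = t₀ < t₁ < ⋯ < t_N = 1 such that on each subinterval [t_{k−1}, t_k] either m'(x) ≥ 0 for all x or m'(x) ≤ 0 for all x. Then λ₁^{𝒟}(s) → ∞ as s → ∞ if and only if one of the following holds: (a) m is strictly increasing on [0,1]; (b) m is strictly decreasing on [0,1]; (c) there exists x₀ ∈ (0,1) such that m is strictly decreasing on [0,x₀] and strictly increasing on [x₀,1]. -/

import Mathlib

/-!
Write `w = exp (2 s m)`. Suppose `m` has a peak at an interior point `p`: `m` is monotone on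
`[p - δ, p]` and antitone on `[p, p + δ]` (plateaus included). A bump equal to `1` on
`[p - δ/2, p + δ/2]` and supported in `(p - δ, p + δ)` then has Rayleigh quotient bounded
in `s ≥ 0`: with `μ = max (m (p - δ/2)) (m (p + δ/2))` we have `m ≤ μ` where the bump is not
locally constant and `m ≥ μ` on half of the plateau of the bump, so its weighted gradient
energy is `O(exp (2 s μ))` while its weighted mass is `≥ c · exp (2 s μ)`.

Conversely, if `m` decreases strictly on `[0, p]` and increases strictly on `[p, 1]`, then
Cauchy–Schwarz applied to `φ x = ∫₀ˣ φ'` (resp. `-∫ₓ¹ φ'`) gives the weighted Hardy inequality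
`∫ w φ² ≤ (∫ w φ'²) H(s)` with
`H(s) = ∫₀ᵖ ∫₀ˣ exp (2 s (m x - m t)) dt dx + ∫ₚ¹ ∫ₓ¹ exp (2 s (m x - m t)) dt dx`.
The exponents are negative off the diagonal, so `H(s) → 0` by dominated convergence (twice),
and `λ₁(s) ≥ 1 / H(s) - max |c| → ∞`.

A continuous `m` with `m y < max (m x) (m z)` whenever `x < y < z` decreases strictly up to
its minimum and increases strictly after it, so it has one of the three shapes. If instead
`max (m x) (m z) ≤ m y` for some `x < y < z`, the maximum of `m` on `[x, z]` is attained at an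
interior point, and the finitely many monotonicity pieces of `m` make it a peak.
-/

open MeasureTheory Filter Set

/-- The Dirichlet principal eigenvalue of `-φ'' - 2 s m' φ' + c φ = λ φ` on `(0,1)`
with `φ(0) = φ(1) = 0`, via its variational characterization. -/
noncomputable def lambdaD (m c : ℝ → ℝ) (s : ℝ) : ℝ :=
  sInf {l : ℝ | ∃ φ : ℝ → ℝ, ContDiff ℝ 1 φ ∧ φ 0 = 0 ∧ φ 1 = 0 ∧
    (∫ x in (0:ℝ)..1, Real.exp (2 * s * m x) * (φ x) ^ 2) = 1 ∧
    l = ∫ x in (0:ℝ)..1, Real.exp (2 * s * m x) * ((deriv φ x) ^ 2 + c x * (φ x) ^ 2)}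

open Real

theorem sq_intervalIntegral_mul_le {f g : ℝ → ℝ} (hf : Continuous f) (hg : Continuous g)
    {a b : ℝ} (hab : a ≤ b) :
    (∫ t in a..b, f t * g t) ^ 2 ≤ (∫ t in a..b, f t ^ 2) * ∫ t in a..b, g t ^ 2 := by
  have hquad : ∀ r : ℝ, 0 ≤ (∫ t in a..b, g t ^ 2) * (r * r) +
      (-2 * ∫ t in a..b, f t * g t) * r + ∫ t in a..b, f t ^ 2 := by
    intro r
    have hsq : ∫ t in a..b, (f t - r * g t) ^ 2 = (∫ t in a..b, g t ^ 2) * (r * r) +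
        (-2 * ∫ t in a..b, f t * g t) * r + ∫ t in a..b, f t ^ 2 := by
      rw [intervalIntegral.integral_congr (g := fun t =>
          r * r * g t ^ 2 + -2 * r * (f t * g t) + f t ^ 2) fun t _ => by ring,
        intervalIntegral.integral_add, intervalIntegral.integral_add,
        intervalIntegral.integral_const_mul, intervalIntegral.integral_const_mul]
      · ring
      all_goals exact Continuous.intervalIntegrable (by fun_prop) _ _
    rw [← hsq]
    exact intervalIntegral.integral_nonneg hab fun t _ => sq_nonneg _
  have hdiscrim := discrim_le_zero hquad
  rw [discrim] at hdiscrim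
  nlinarith

theorem sq_sub_le_integral_exp_mul {φ g : ℝ → ℝ} (hφ : ContDiff ℝ 1 φ) (hg : Continuous g)
    {a b : ℝ} (hab : a ≤ b) :
    (φ b - φ a) ^ 2 ≤ (∫ t in a..b, exp (g t) * deriv φ t ^ 2) * ∫ t in a..b, exp (-g t) := by
  have hφ' := hφ.continuous_deriv le_rfl
  have hftc : φ b - φ a = ∫ t in a..b, exp (g t / 2) * deriv φ t * exp (-(g t / 2)) := by
    rw [← intervalIntegral.integral_deriv_eq_sub
      (fun x _ => (hφ.differentiable one_ne_zero).differentiableAt) (hφ'.intervalIntegrable _ _)]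
    refine intervalIntegral.integral_congr fun t _ => ?_
    rw [mul_right_comm, ← exp_add, add_neg_cancel, exp_zero, one_mul]
  have hsq : ∀ u, exp (u / 2) ^ 2 = exp u := fun u => by rw [← exp_nat_mul]; ring_nf
  calc (φ b - φ a) ^ 2
      ≤ (∫ t in a..b, (exp (g t / 2) * deriv φ t) ^ 2) * ∫ t in a..b, exp (-(g t / 2)) ^ 2 := by
        rw [hftc]; exact sq_intervalIntegral_mul_le (by fun_prop) (by fun_prop) hab
    _ = (∫ t in a..b, exp (g t) * deriv φ t ^ 2) * ∫ t in a..b, exp (-g t) := by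
        simp_rw [mul_pow, hsq, ← neg_div, hsq]

theorem tendsto_intervalIntegral_zero_of_norm_le_const {ι : Type*} {l : Filter ι}
    [l.IsCountablyGenerated] {F : ι → ℝ → ℝ} {a b C : ℝ} (hab : a ≤ b) (hF : ∀ i, Continuous (F i))
    (hbound : ∀ᶠ i in l, ∀ x ∈ Ioo a b, ‖F i x‖ ≤ C)
    (hlim : ∀ x ∈ Ioo a b, Tendsto (fun i => F i x) l (nhds 0)) :
    Tendsto (fun i => ∫ x in a..b, F i x) l (nhds 0) := by
  simp_rw [intervalIntegral.integral_of_le hab, integral_Ioc_eq_integral_Ioo]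
  have hmem := ae_restrict_mem (μ := volume) (measurableSet_Ioo (a := a) (b := b))
  simpa using tendsto_integral_filter_of_dominated_convergence (fun _ => C)
    (Eventually.of_forall fun i => (hF i).aestronglyMeasurable)
    (hbound.mono fun i hi => hmem.mono hi) (integrableOn_const measure_Ioo_lt_top.ne)
    (hmem.mono hlim)

theorem ContDiffBump.dist_mem_Icc_of_deriv_ne_zero {c : ℝ} (f : ContDiffBump c) {x : ℝ}
    (hx : deriv f x ≠ 0) : dist x c ∈ Icc f.rIn f.rOut := by
  by_contra hmem
  rcases not_and_or.1 hmem with hin | hout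
  · have hloc : (f : ℝ → ℝ) =ᶠ[nhds x] fun _ => 1 :=
      eventually_of_mem (Metric.isOpen_ball.mem_nhds (Metric.mem_ball.2 (not_le.1 hin)))
        fun y hy => f.one_of_mem_closedBall (Metric.ball_subset_closedBall hy)
    exact hx (by rw [hloc.deriv_eq, deriv_const])
  · have hloc : (f : ℝ → ℝ) =ᶠ[nhds x] fun _ => 0 :=
      eventually_of_mem (Metric.isClosed_closedBall.isOpen_compl.mem_nhds
        (by simpa using not_le.1 hout)) fun y hy =>
        f.zero_of_le_dist (le_of_lt (by simpa using hy))
    exact hx (by rw [hloc.deriv_eq, deriv_const])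

section Shape

theorem exists_lt_le_succ_of_lt_le {α : Type*} [LinearOrder α] {t : ℕ → α} {p : α} {N : ℕ}
    (h0 : t 0 < p) (hN : p ≤ t N) : ∃ k < N, t k < p ∧ p ≤ t (k + 1) := by
  induction N with
  | zero => exact absurd (h0.trans_le hN) (lt_irrefl _)
  | succ N ih =>
    by_cases h : p ≤ t N
    · obtain ⟨k, hk, hkp⟩ := ih h
      exact ⟨k, by omega, hkp⟩
    · exact ⟨N, N.lt_succ_self, not_le.1 h, hN⟩

theorem exists_le_lt_succ_of_le_lt {α : Type*} [LinearOrder α] {t : ℕ → α} {p : α} {N : ℕ}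
    (h0 : t 0 ≤ p) (hN : p < t N) : ∃ k < N, t k ≤ p ∧ p < t (k + 1) := by
  induction N with
  | zero => exact absurd (h0.trans_lt hN) (lt_irrefl _)
  | succ N ih =>
    by_cases h : p < t N
    · obtain ⟨k, hk, hkp⟩ := ih h
      exact ⟨k, by omega, hkp⟩
    · exact ⟨N, N.lt_succ_self, not_lt.1 h, hN⟩

theorem monotoneOn_or_antitoneOn_of_deriv {f : ℝ → ℝ} (hf : Differentiable ℝ f) {a b : ℝ}
    (h : (∀ x ∈ Icc a b, 0 ≤ deriv f x) ∨ (∀ x ∈ Icc a b, deriv f x ≤ 0)) :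
    MonotoneOn f (Icc a b) ∨ AntitoneOn f (Icc a b) :=
  h.imp
    (fun h => monotoneOn_of_deriv_nonneg (convex_Icc a b) hf.continuous.continuousOn
      hf.differentiableOn fun x hx => h x (interior_subset hx))
    (fun h => antitoneOn_of_deriv_nonpos (convex_Icc a b) hf.continuous.continuousOn
      hf.differentiableOn fun x hx => h x (interior_subset hx))

variable {α β : Type*} [LinearOrder α] [PartialOrder β] {f : α → β}

theorem exists_lt_monotoneOn_or_antitoneOn {N : ℕ} {t : ℕ → α}
    (hf : ∀ k < N, MonotoneOn f (Icc (t k) (t (k + 1))) ∨ AntitoneOn f (Icc (t k) (t (k + 1))))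
    {p : α} (h0 : t 0 < p) (hN : p ≤ t N) :
    ∃ a < p, MonotoneOn f (Icc a p) ∨ AntitoneOn f (Icc a p) := by
  obtain ⟨k, hk, hkp, hpk⟩ := exists_lt_le_succ_of_lt_le h0 hN
  have hsub : Icc (t k) p ⊆ Icc (t k) (t (k + 1)) := Icc_subset_Icc le_rfl hpk
  exact ⟨t k, hkp, (hf k hk).imp (·.mono hsub) (·.mono hsub)⟩

theorem exists_gt_monotoneOn_or_antitoneOn {N : ℕ} {t : ℕ → α}
    (hf : ∀ k < N, MonotoneOn f (Icc (t k) (t (k + 1))) ∨ AntitoneOn f (Icc (t k) (t (k + 1))))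
    {p : α} (h0 : t 0 ≤ p) (hN : p < t N) :
    ∃ b > p, MonotoneOn f (Icc p b) ∨ AntitoneOn f (Icc p b) := by
  obtain ⟨k, hk, hkp, hpk⟩ := exists_le_lt_succ_of_le_lt h0 hN
  have hsub : Icc p (t (k + 1)) ⊆ Icc (t k) (t (k + 1)) := Icc_subset_Icc hkp le_rfl
  exact ⟨t (k + 1), hpk, (hf k hk).imp (·.mono hsub) (·.mono hsub)⟩

theorem monotoneOn_Icc_of_le_right {a p : α}
    (h : MonotoneOn f (Icc a p) ∨ AntitoneOn f (Icc a p)) (hmax : ∀ x ∈ Icc a p, f x ≤ f p) :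
    MonotoneOn f (Icc a p) := by
  refine h.elim id fun hanti x hx y hy _ => ?_
  rw [le_antisymm (hmax x hx) (hanti hx (right_mem_Icc.2 (hx.1.trans hx.2)) hx.2),
    le_antisymm (hmax y hy) (hanti hy (right_mem_Icc.2 (hy.1.trans hy.2)) hy.2)]

theorem antitoneOn_Icc_of_le_left {p b : α}
    (h : MonotoneOn f (Icc p b) ∨ AntitoneOn f (Icc p b)) (hmax : ∀ x ∈ Icc p b, f x ≤ f p) :
    AntitoneOn f (Icc p b) := by
  refine h.elim (fun hmono x hx y hy _ => ?_) id
  rw [le_antisymm (hmax x hx) (hmono (left_mem_Icc.2 (hx.1.trans hx.2)) hx hx.1),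
    le_antisymm (hmax y hy) (hmono (left_mem_Icc.2 (hy.1.trans hy.2)) hy hy.1)]

end Shape

section Peak

variable {f : ℝ → ℝ}

theorem exists_strictAntiOn_strictMonoOn_of_lt_max {a b : ℝ} (hab : a ≤ b)
    (hf : ContinuousOn f (Icc a b))
    (hlt : ∀ x ∈ Icc a b, ∀ y, ∀ z ∈ Icc a b, x < y → y < z → f y < max (f x) (f z)) :
    ∃ p ∈ Icc a b, StrictAntiOn f (Icc a p) ∧ StrictMonoOn f (Icc p b) := by
  obtain ⟨p, hp, hmin⟩ := isCompact_Icc.exists_isMinOn (nonempty_Icc.2 hab) hf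
  rw [isMinOn_iff] at hmin
  have hstrict : ∀ q ∈ Icc a b, q ≠ p → f p < f q := by
    intro q hq hqp
    rcases hqp.lt_or_gt with h | h
    · have hr := hlt q hq ((q + p) / 2) p hp (by linarith) (by linarith)
      rw [max_eq_left (hmin q hq)] at hr
      exact (hmin _ ⟨by linarith [hq.1], by linarith [hp.2]⟩).trans_lt hr
    · have hr := hlt p hp ((p + q) / 2) q hq (by linarith) (by linarith)
      rw [max_eq_right (hmin q hq)] at hr
      exact (hmin _ ⟨by linarith [hp.1], by linarith [hq.2]⟩).trans_lt hr
  refine ⟨p, hp, fun x hx y hy hxy => ?_, fun x hx y hy hxy => ?_⟩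
  · have hx' : x ∈ Icc a b := ⟨hx.1, hx.2.trans hp.2⟩
    rcases hy.2.eq_or_lt with rfl | hyp
    · exact hstrict x hx' hxy.ne
    · have hr := hlt x hx' y p hp hxy hyp
      rwa [max_eq_left (hmin x hx')] at hr
  · have hy' : y ∈ Icc a b := ⟨hp.1.trans hy.1, hy.2⟩
    rcases hx.1.eq_or_lt with rfl | hpx
    · exact hstrict y hy' hxy.ne'
    · have hr := hlt p hp x y hy' hpx hxy
      rwa [max_eq_right (hmin y hy')] at hr

theorem exists_mem_Ioo_isMaxOn {x y z : ℝ} (hf : ContinuousOn f (Icc x z)) (hxy : x < y)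
    (hyz : y < z) (hy : max (f x) (f z) ≤ f y) : ∃ p ∈ Ioo x z, IsMaxOn f (Icc x z) p := by
  obtain ⟨q, hq, hmax⟩ := isCompact_Icc.exists_isMaxOn ⟨y, hxy.le, hyz.le⟩ hf
  by_cases hq' : q ∈ Ioo x z
  · exact ⟨q, hq', hmax⟩
  have hqy : f q ≤ f y := by
    rcases not_and_or.1 hq' with h | h
    · rw [le_antisymm (not_lt.1 h) hq.1]; exact (le_max_left _ _).trans hy
    · rw [le_antisymm hq.2 (not_lt.1 h)]; exact (le_max_right _ _).trans hy
  exact ⟨y, ⟨hxy, hyz⟩, isMaxOn_iff.2 fun w hw => (isMaxOn_iff.1 hmax w hw).trans hqy⟩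

theorem exists_monotoneOn_antitoneOn_of_isMaxOn {x z p : ℝ} (hp : p ∈ Ioo x z)
    (hmax : IsMaxOn f (Icc x z) p)
    (hleft : ∃ a < p, MonotoneOn f (Icc a p) ∨ AntitoneOn f (Icc a p))
    (hright : ∃ b > p, MonotoneOn f (Icc p b) ∨ AntitoneOn f (Icc p b)) :
    ∃ δ > 0, x ≤ p - δ ∧ p + δ ≤ z ∧
      MonotoneOn f (Icc (p - δ) p) ∧ AntitoneOn f (Icc p (p + δ)) := by
  obtain ⟨a, hap, ha⟩ := hleft
  obtain ⟨b, hpb, hb⟩ := hright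
  set δ := min (min (p - a) (p - x)) (min (b - p) (z - p))
  have hδ : 0 < δ := lt_min (lt_min (by linarith) (by linarith [hp.1]))
    (lt_min (by linarith) (by linarith [hp.2]))
  have hδa : δ ≤ p - a := (min_le_left _ _).trans (min_le_left _ _)
  have hδx : δ ≤ p - x := (min_le_left _ _).trans (min_le_right _ _)
  have hδb : δ ≤ b - p := (min_le_right _ _).trans (min_le_left _ _)
  have hδz : δ ≤ z - p := (min_le_right _ _).trans (min_le_right _ _)
  have hsubl : Icc (p - δ) p ⊆ Icc a p := Icc_subset_Icc (by linarith) le_rfl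
  have hsubr : Icc p (p + δ) ⊆ Icc p b := Icc_subset_Icc le_rfl (by linarith)
  refine ⟨δ, hδ, by linarith, by linarith, ?_, ?_⟩
  · refine monotoneOn_Icc_of_le_right (ha.imp (·.mono hsubl) (·.mono hsubl)) fun w hw => ?_
    exact isMaxOn_iff.1 hmax w ⟨by linarith [hw.1], hw.2.trans hp.2.le⟩
  · refine antitoneOn_Icc_of_le_left (hb.imp (·.mono hsubr) (·.mono hsubr)) fun w hw => ?_
    exact isMaxOn_iff.1 hmax w ⟨hp.1.le.trans hw.1, by linarith [hw.2]⟩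

end Peak

theorem strictMonoOn_or_strictAntiOn_or_valley_iff {f : ℝ → ℝ} :
    (StrictMonoOn f (Icc (0:ℝ) 1) ∨ StrictAntiOn f (Icc (0:ℝ) 1) ∨
      ∃ x₀ ∈ Ioo (0:ℝ) 1, StrictAntiOn f (Icc (0:ℝ) x₀) ∧ StrictMonoOn f (Icc x₀ 1)) ↔
    ∃ p ∈ Icc (0:ℝ) 1, StrictAntiOn f (Icc 0 p) ∧ StrictMonoOn f (Icc p 1) := by
  constructor
  · rintro (hmono | hanti | ⟨p, hp, hanti, hmono⟩)
    · exact ⟨0, left_mem_Icc.2 zero_le_one, (subsingleton_Icc_of_ge le_rfl).strictAntiOn f, hmono⟩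
    · exact ⟨1, right_mem_Icc.2 zero_le_one, hanti, (subsingleton_Icc_of_ge le_rfl).strictMonoOn f⟩
    · exact ⟨p, Ioo_subset_Icc_self hp, hanti, hmono⟩
  · rintro ⟨p, hp, hanti, hmono⟩
    rcases hp.1.eq_or_lt with rfl | hp0
    · exact Or.inl hmono
    rcases hp.2.eq_or_lt with rfl | hp1
    · exact Or.inr (Or.inl hanti)
    · exact Or.inr (Or.inr ⟨p, ⟨hp0, hp1⟩, hanti, hmono⟩)

noncomputable def weightedMass (m : ℝ → ℝ) (s : ℝ) (φ : ℝ → ℝ) : ℝ :=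
  ∫ x in (0:ℝ)..1, exp (2 * s * m x) * φ x ^ 2

noncomputable def weightedGradEnergy (m : ℝ → ℝ) (s : ℝ) (φ : ℝ → ℝ) : ℝ :=
  ∫ x in (0:ℝ)..1, exp (2 * s * m x) * deriv φ x ^ 2

noncomputable def weightedEnergy (m c : ℝ → ℝ) (s : ℝ) (φ : ℝ → ℝ) : ℝ :=
  ∫ x in (0:ℝ)..1, exp (2 * s * m x) * (deriv φ x ^ 2 + c x * φ x ^ 2)

def rayleighValues (m c : ℝ → ℝ) (s : ℝ) : Set ℝ :=
  {l | ∃ φ : ℝ → ℝ, ContDiff ℝ 1 φ ∧ φ 0 = 0 ∧ φ 1 = 0 ∧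
    weightedMass m s φ = 1 ∧ l = weightedEnergy m c s φ}

theorem lambdaD_eq_sInf (m c : ℝ → ℝ) (s : ℝ) : lambdaD m c s = sInf (rayleighValues m c s) :=
  rfl

section Rayleigh

variable {m c φ : ℝ → ℝ} {s M : ℝ}

theorem exists_abs_le_on_Icc_of_continuous (hc : Continuous c) :
    ∃ M, ∀ x ∈ Icc (0:ℝ) 1, |c x| ≤ M :=
  isCompact_Icc.exists_bound_of_continuousOn hc.continuousOn

theorem weightedGradEnergy_nonneg : 0 ≤ weightedGradEnergy m s φ :=
  intervalIntegral.integral_nonneg zero_le_one fun _ _ => by positivity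

theorem abs_weightedEnergy_sub_le (hm : Continuous m) (hc : Continuous c)
    (hM : ∀ x ∈ Icc (0:ℝ) 1, |c x| ≤ M) (hφ : ContDiff ℝ 1 φ) :
    |weightedEnergy m c s φ - weightedGradEnergy m s φ| ≤ M * weightedMass m s φ := by
  have hsplit : weightedEnergy m c s φ - weightedGradEnergy m s φ =
      ∫ x in (0:ℝ)..1, c x * (exp (2 * s * m x) * φ x ^ 2) := by
    rw [weightedEnergy, weightedGradEnergy, ← intervalIntegral.integral_sub]
    · exact intervalIntegral.integral_congr fun x _ => by ring
    all_goals exact Continuous.intervalIntegrable (by fun_prop) _ _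
  rw [hsplit, weightedMass, ← intervalIntegral.integral_const_mul]
  refine (intervalIntegral.abs_integral_le_integral_abs zero_le_one).trans
    (intervalIntegral.integral_mono_on zero_le_one ?_ ?_ fun x hx => ?_)
  · exact Continuous.intervalIntegrable (by fun_prop) _ _
  · exact Continuous.intervalIntegrable (by fun_prop) _ _
  · have hmass : 0 ≤ exp (2 * s * m x) * φ x ^ 2 := by positivity
    rw [abs_mul, abs_of_nonneg hmass]
    exact mul_le_mul_of_nonneg_right (hM x hx) hmass

theorem weightedMass_const_mul (r : ℝ) :
    weightedMass m s (fun x => r * φ x) = r ^ 2 * weightedMass m s φ := by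
  rw [weightedMass, weightedMass, ← intervalIntegral.integral_const_mul]
  exact intervalIntegral.integral_congr fun x _ => by ring

theorem weightedEnergy_const_mul (r : ℝ) :
    weightedEnergy m c s (fun x => r * φ x) = r ^ 2 * weightedEnergy m c s φ := by
  rw [weightedEnergy, weightedEnergy, ← intervalIntegral.integral_const_mul, deriv_const_mul_field']
  exact intervalIntegral.integral_congr fun x _ => by ring

theorem weightedEnergy_div_mem_rayleighValues (hφ : ContDiff ℝ 1 φ) (h0 : φ 0 = 0)
    (h1 : φ 1 = 0) (hpos : 0 < weightedMass m s φ) :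
    weightedEnergy m c s φ / weightedMass m s φ ∈ rayleighValues m c s := by
  set r := (√(weightedMass m s φ))⁻¹
  have hr : r ^ 2 = (weightedMass m s φ)⁻¹ := by rw [inv_pow, sq_sqrt hpos.le]
  refine ⟨fun x => r * φ x, contDiff_const.mul hφ, by simp [h0], by simp [h1], ?_, ?_⟩
  · rw [weightedMass_const_mul, hr, inv_mul_cancel₀ hpos.ne']
  · rw [weightedEnergy_const_mul, hr, inv_mul_eq_div]

theorem rayleighValues_nonempty (hm : Continuous m) : (rayleighValues m c s).Nonempty := by
  set ψ : ℝ → ℝ := fun x => x * (1 - x)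
  have hψ : ContDiff ℝ 1 ψ := by fun_prop
  refine ⟨_, weightedEnergy_div_mem_rayleighValues hψ (by simp [ψ]) (by simp [ψ]) ?_⟩
  refine intervalIntegral.intervalIntegral_pos_of_pos_on
    (Continuous.intervalIntegrable (by fun_prop) _ _) (fun x hx => ?_) zero_lt_one
  have : 0 < ψ x := mul_pos hx.1 (sub_pos.2 hx.2)
  positivity

theorem rayleighValues_bddBelow (hm : Continuous m) (hc : Continuous c)
    (hM : ∀ x ∈ Icc (0:ℝ) 1, |c x| ≤ M) : BddBelow (rayleighValues m c s) := by
  refine ⟨-M, ?_⟩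
  rintro _ ⟨φ, hφ, -, -, hnorm, rfl⟩
  have h := abs_weightedEnergy_sub_le (s := s) hm hc hM hφ
  rw [hnorm, mul_one] at h
  linarith [(abs_le.1 h).1, weightedGradEnergy_nonneg (m := m) (s := s) (φ := φ)]

end Rayleigh

section UpperBound

variable {m c : ℝ → ℝ} {s M : ℝ}

theorem lambdaD_le_div (hm : Continuous m) (hc : Continuous c)
    (hM : ∀ x ∈ Icc (0:ℝ) 1, |c x| ≤ M) {ψ : ℝ → ℝ} (hψ : ContDiff ℝ 1 ψ) (h0 : ψ 0 = 0)
    (h1 : ψ 1 = 0) (hpos : 0 < weightedMass m s ψ) :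
    lambdaD m c s ≤ weightedEnergy m c s ψ / weightedMass m s ψ := by
  rw [lambdaD_eq_sInf]
  exact csInf_le (rayleighValues_bddBelow hm hc hM)
    (weightedEnergy_div_mem_rayleighValues hψ h0 h1 hpos)

theorem lambdaD_le_of_testFunction (hm : Continuous m) (hc : Continuous c)
    (hM : ∀ x ∈ Icc (0:ℝ) 1, |c x| ≤ M) {ψ : ℝ → ℝ} (hψ : ContDiff ℝ 1 ψ) (h0 : ψ 0 = 0)
    (h1 : ψ 1 = 0) {a b μ : ℝ} (ha : 0 ≤ a) (hab : a < b) (hb : b ≤ 1)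
    (hψab : ∀ x ∈ Icc a b, ψ x = 1) (hμm : ∀ x ∈ Icc a b, μ ≤ m x)
    (hmμ : ∀ x ∈ Icc (0:ℝ) 1, deriv ψ x ≠ 0 → m x ≤ μ) (hs : 0 ≤ s) :
    lambdaD m c s ≤ (∫ x in (0:ℝ)..1, deriv ψ x ^ 2) / (b - a) + M := by
  have hexp : ∀ u v, u ≤ v → exp (2 * s * u) ≤ exp (2 * s * v) := fun u v huv =>
    exp_le_exp.2 (mul_le_mul_of_nonneg_left huv (by positivity))
  have hmass : exp (2 * s * μ) * (b - a) ≤ weightedMass m s ψ := by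
    calc exp (2 * s * μ) * (b - a) = ∫ x in a..b, exp (2 * s * μ) := by simp [mul_comm]
      _ ≤ ∫ x in a..b, exp (2 * s * m x) * ψ x ^ 2 :=
        intervalIntegral.integral_mono_on hab.le intervalIntegrable_const
          (Continuous.intervalIntegrable (by fun_prop) _ _) fun x hx => by
            rw [hψab x hx, one_pow, mul_one]; exact hexp _ _ (hμm x hx)
      _ ≤ weightedMass m s ψ :=
        intervalIntegral.integral_mono_interval ha hab.le hb
          (Eventually.of_forall fun x => by positivity)
          (Continuous.intervalIntegrable (by fun_prop) _ _)
  have hgrad : weightedGradEnergy m s ψ ≤ exp (2 * s * μ) * ∫ x in (0:ℝ)..1, deriv ψ x ^ 2 := by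
    rw [← intervalIntegral.integral_const_mul]
    refine intervalIntegral.integral_mono_on zero_le_one
      (Continuous.intervalIntegrable (by fun_prop) _ _)
      (Continuous.intervalIntegrable (by fun_prop) _ _) fun x hx => ?_
    by_cases hx' : deriv ψ x = 0
    · simp [hx']
    · exact mul_le_mul_of_nonneg_right (hexp _ _ (hmμ x hx hx')) (sq_nonneg _)
  have hpos : 0 < weightedMass m s ψ := (mul_pos (exp_pos _) (sub_pos.2 hab)).trans_le hmass
  have henergy := (abs_le.1 (abs_weightedEnergy_sub_le (s := s) hm hc hM hψ)).2
  calc lambdaD m c s ≤ weightedEnergy m c s ψ / weightedMass m s ψ :=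
        lambdaD_le_div hm hc hM hψ h0 h1 hpos
    _ ≤ weightedGradEnergy m s ψ / weightedMass m s ψ + M := by
        rw [div_add' _ _ _ hpos.ne', div_le_div_iff_of_pos_right hpos]; linarith
    _ ≤ (exp (2 * s * μ) * ∫ x in (0:ℝ)..1, deriv ψ x ^ 2) / (exp (2 * s * μ) * (b - a)) + M := by
        gcongr
        exact mul_nonneg (exp_pos _).le
            (intervalIntegral.integral_nonneg zero_le_one fun _ _ => sq_nonneg _)
    _ = (∫ x in (0:ℝ)..1, deriv ψ x ^ 2) / (b - a) + M := by
        rw [mul_div_mul_left _ _ (exp_pos _).ne']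

theorem exists_lambdaD_le_of_peak (hm : Continuous m) (hc : Continuous c)
    {p δ : ℝ} (hδ : 0 < δ) (hp0 : δ ≤ p) (hp1 : p + δ ≤ 1)
    (hmono : MonotoneOn m (Icc (p - δ) p)) (hanti : AntitoneOn m (Icc p (p + δ))) :
    ∃ C, ∀ s ≥ 0, lambdaD m c s ≤ C := by
  obtain ⟨M, hM⟩ := exists_abs_le_on_Icc_of_continuous hc
  let f : ContDiffBump p := ⟨δ / 2, δ, half_pos hδ, half_lt_self hδ⟩
  have hrIn : f.rIn = δ / 2 := rfl
  have hrOut : f.rOut = δ := rfl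
  have hinner : ∃ a b, p - δ / 2 ≤ a ∧ a < b ∧ b ≤ p + δ / 2 ∧
      ∀ x ∈ Icc a b, max (m (p - δ / 2)) (m (p + δ / 2)) ≤ m x := by
    rcases le_total (m (p + δ / 2)) (m (p - δ / 2)) with h | h
    · refine ⟨p - δ / 2, p, le_rfl, by linarith, by linarith, fun x hx => ?_⟩
      rw [max_eq_left h]
      exact hmono ⟨by linarith, by linarith⟩ ⟨hx.1.trans' (by linarith), hx.2⟩ hx.1
    · refine ⟨p, p + δ / 2, by linarith, by linarith, le_rfl, fun x hx => ?_⟩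
      rw [max_eq_right h]
      exact hanti ⟨hx.1, hx.2.trans (by linarith)⟩ ⟨by linarith, by linarith⟩ hx.2
  obtain ⟨a, b, ha, hab, hb, hμ⟩ := hinner
  have hout : ∀ x ∈ Icc (0:ℝ) 1, deriv f x ≠ 0 →
      m x ≤ max (m (p - δ / 2)) (m (p + δ / 2)) := by
    intro x _ hx
    have hdist := f.dist_mem_Icc_of_deriv_ne_zero hx
    rw [Real.dist_eq, hrIn, hrOut] at hdist
    rcases le_total x p with hxp | hxp
    · rw [abs_of_nonpos (by linarith)] at hdist
      exact (hmono ⟨by linarith [hdist.2], hxp⟩ ⟨by linarith, by linarith⟩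
        (by linarith [hdist.1])).trans (le_max_left _ _)
    · rw [abs_of_nonneg (by linarith)] at hdist
      exact (hanti ⟨by linarith, by linarith⟩ ⟨hxp, by linarith [hdist.2]⟩
        (by linarith [hdist.1])).trans (le_max_right _ _)
  have hzero : ∀ x, δ ≤ |x - p| → f x = 0 := fun x hx => f.zero_of_le_dist (by simpa [Real.dist_eq])
  refine ⟨_, fun s hs => lambdaD_le_of_testFunction hm hc hM f.contDiff
    (hzero 0 (by rw [abs_of_nonpos (by linarith)]; linarith))
    (hzero 1 (by rw [abs_of_nonneg (by linarith)]; linarith)) (by linarith) hab (by linarith)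
    (fun x hx => f.one_of_mem_closedBall ?_) hμ hout hs⟩
  rw [Metric.mem_closedBall, Real.dist_eq, abs_le, hrIn]
  exact ⟨by linarith [hx.1], by linarith [hx.2]⟩

end UpperBound

noncomputable def hardyKernel (m : ℝ → ℝ) (s x u v : ℝ) : ℝ :=
  exp (2 * s * m x) * ∫ t in u..v, exp (-(2 * s * m t))

noncomputable def hardyFactor (m : ℝ → ℝ) (p s : ℝ) : ℝ :=
  (∫ x in (0:ℝ)..p, hardyKernel m s x 0 x) + ∫ x in p..1, hardyKernel m s x x 1

section Hardy

variable {m : ℝ → ℝ} {s x u v : ℝ}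

theorem hardyKernel_eq_integral :
    hardyKernel m s x u v = ∫ t in u..v, exp (s * (2 * (m x - m t))) := by
  rw [hardyKernel, ← intervalIntegral.integral_const_mul]
  exact intervalIntegral.integral_congr fun t _ => by rw [← exp_add]; ring_nf

theorem continuous_hardyKernel_left (hm : Continuous m) :
    Continuous fun x => hardyKernel m s x 0 x :=
  (by fun_prop : Continuous fun x => exp (2 * s * m x)).mul
    (intervalIntegral.continuous_primitive
      (fun _ _ => Continuous.intervalIntegrable (by fun_prop) _ _) 0)

theorem continuous_hardyKernel_right (hm : Continuous m) :
    Continuous fun x => hardyKernel m s x x 1 := by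
  simp_rw [hardyKernel, intervalIntegral.integral_symm 1]
  exact (by fun_prop : Continuous fun x => exp (2 * s * m x)).mul
    (intervalIntegral.continuous_primitive
      (fun _ _ => Continuous.intervalIntegrable (by fun_prop) _ _) 1).neg

theorem weightedMass_le_mul_hardyFactor (hm : Continuous m) {φ : ℝ → ℝ} (hφ : ContDiff ℝ 1 φ)
    (h0 : φ 0 = 0) (h1 : φ 1 = 0) {p : ℝ} (hp : p ∈ Icc (0:ℝ) 1) :
    weightedMass m s φ ≤ weightedGradEnergy m s φ * hardyFactor m p s := by
  set D := weightedGradEnergy m s φ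
  have hD : ∀ u v, 0 ≤ u → u ≤ v → v ≤ 1 → ∫ t in u..v, exp (2 * s * m t) * deriv φ t ^ 2 ≤ D :=
    fun u v hu huv hv => intervalIntegral.integral_mono_interval hu huv hv
      (Eventually.of_forall fun _ => by positivity)
      (Continuous.intervalIntegrable (by fun_prop) _ _)
  have hpoint : ∀ x u v, 0 ≤ u → u ≤ v → v ≤ 1 → φ x ^ 2 ≤ (φ v - φ u) ^ 2 →
      exp (2 * s * m x) * φ x ^ 2 ≤ D * hardyKernel m s x u v := by
    intro x u v hu huv hv hφx
    have hle := sq_sub_le_integral_exp_mul hφ (g := fun t => 2 * s * m t) (by fun_prop) huv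
    have hexp : 0 ≤ ∫ t in u..v, exp (-(2 * s * m t)) :=
      intervalIntegral.integral_nonneg huv fun _ _ => (exp_pos _).le
    calc exp (2 * s * m x) * φ x ^ 2
        ≤ exp (2 * s * m x) * (D * ∫ t in u..v, exp (-(2 * s * m t))) :=
          mul_le_mul_of_nonneg_left (hφx.trans (hle.trans
            (mul_le_mul_of_nonneg_right (hD u v hu huv hv) hexp))) (exp_pos _).le
      _ = D * hardyKernel m s x u v := by rw [hardyKernel]; ring
  have hint : ∀ u v, IntervalIntegrable (fun x => exp (2 * s * m x) * φ x ^ 2) volume u v :=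
    fun _ _ => Continuous.intervalIntegrable (by fun_prop) _ _
  rw [weightedMass, ← intervalIntegral.integral_add_adjacent_intervals (hint 0 p) (hint p 1),
    hardyFactor, mul_add, ← intervalIntegral.integral_const_mul,
    ← intervalIntegral.integral_const_mul]
  gcongr ?_ + ?_
  · refine intervalIntegral.integral_mono_on hp.1 (hint 0 p)
      (((continuous_hardyKernel_left hm).const_mul D).intervalIntegrable _ _) fun x hx => ?_
    exact hpoint x 0 x le_rfl hx.1 (hx.2.trans hp.2) (by rw [h0, sub_zero])
  · refine intervalIntegral.integral_mono_on hp.2 (hint p 1)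
      (((continuous_hardyKernel_right hm).const_mul D).intervalIntegrable _ _) fun x hx => ?_
    exact hpoint x x 1 (hp.1.trans hx.1) hx.2 le_rfl (by rw [h1, zero_sub, neg_sq])

theorem norm_hardyKernel_le (hs : 0 ≤ s) (huv : u ≤ v) (hmx : ∀ t ∈ Ioc u v, m x ≤ m t) :
    ‖hardyKernel m s x u v‖ ≤ v - u := by
  rw [hardyKernel_eq_integral]
  refine (intervalIntegral.norm_integral_le_of_norm_le_const (C := 1) fun t ht => ?_).trans
    (by rw [one_mul, abs_of_nonneg (sub_nonneg.2 huv)])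
  rw [uIoc_of_le huv] at ht
  rw [Real.norm_eq_abs, abs_of_pos (exp_pos _), exp_le_one_iff]
  exact mul_nonpos_of_nonneg_of_nonpos hs (by linarith [hmx t ht])

theorem tendsto_hardyKernel (hm : Continuous m) (huv : u ≤ v) (hmx : ∀ t ∈ Ioo u v, m x < m t) :
    Tendsto (fun s => hardyKernel m s x u v) atTop (nhds 0) := by
  simp_rw [hardyKernel_eq_integral]
  refine tendsto_intervalIntegral_zero_of_norm_le_const (C := 1) huv (fun s => by fun_prop)
    ((eventually_ge_atTop 0).mono fun s hs t ht => ?_) fun t ht => ?_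
  · rw [Real.norm_eq_abs, abs_of_pos (exp_pos _), exp_le_one_iff]
    exact mul_nonpos_of_nonneg_of_nonpos hs (by linarith [hmx t ht])
  · exact tendsto_exp_atBot.comp
      (tendsto_id.atTop_mul_const_of_neg (by linarith [hmx t ht]))

theorem tendsto_hardyFactor (hm : Continuous m) {p : ℝ} (hp : p ∈ Icc (0:ℝ) 1)
    (hanti : StrictAntiOn m (Icc 0 p)) (hmono : StrictMonoOn m (Icc p 1)) :
    Tendsto (hardyFactor m p) atTop (nhds 0) := by
  have hleft : Tendsto (fun s => ∫ x in (0:ℝ)..p, hardyKernel m s x 0 x) atTop (nhds 0) :=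
    tendsto_intervalIntegral_zero_of_norm_le_const (C := 1) hp.1
      (fun _ => continuous_hardyKernel_left hm)
      ((eventually_ge_atTop 0).mono fun s hs x hx =>
        (norm_hardyKernel_le hs hx.1.le fun t ht => hanti.antitoneOn
          ⟨ht.1.le, ht.2.trans hx.2.le⟩ ⟨hx.1.le, hx.2.le⟩ ht.2).trans (by linarith [hx.2, hp.2]))
      fun x hx => tendsto_hardyKernel hm hx.1.le fun t ht =>
        hanti ⟨ht.1.le, ht.2.le.trans hx.2.le⟩ ⟨hx.1.le, hx.2.le⟩ ht.2
  have hright : Tendsto (fun s => ∫ x in p..1, hardyKernel m s x x 1) atTop (nhds 0) :=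
    tendsto_intervalIntegral_zero_of_norm_le_const (C := 1) hp.2
      (fun _ => continuous_hardyKernel_right hm)
      ((eventually_ge_atTop 0).mono fun s hs x hx =>
        (norm_hardyKernel_le hs hx.2.le fun t ht => hmono.monotoneOn
          ⟨hx.1.le, hx.2.le⟩ ⟨hx.1.le.trans ht.1.le, ht.2⟩ ht.1.le).trans
          (by linarith [hx.1, hp.1]))
      fun x hx => tendsto_hardyKernel hm hx.2.le fun t ht =>
        hmono ⟨hx.1.le, hx.2.le⟩ ⟨hx.1.le.trans ht.1.le, ht.2.le⟩ ht.1
  have hsum := hleft.add hright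
  rw [add_zero] at hsum
  exact hsum

end Hardy

theorem tendsto_lambdaD_atTop_of_strictAntiOn_strictMonoOn {m c : ℝ → ℝ} (hm : Continuous m)
    (hc : Continuous c) {p : ℝ} (hp : p ∈ Icc (0:ℝ) 1) (hanti : StrictAntiOn m (Icc 0 p))
    (hmono : StrictMonoOn m (Icc p 1)) : Tendsto (lambdaD m c) atTop atTop := by
  obtain ⟨M, hM⟩ := exists_abs_le_on_Icc_of_continuous hc
  have hlower : ∀ s, ∀ l ∈ rayleighValues m c s,
      0 < hardyFactor m p s ∧ (hardyFactor m p s)⁻¹ - M ≤ l := by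
    rintro s _ ⟨φ, hφ, h0, h1, hnorm, rfl⟩
    have hmass := weightedMass_le_mul_hardyFactor (s := s) hm hφ h0 h1 hp
    have hD := weightedGradEnergy_nonneg (m := m) (s := s) (φ := φ)
    have hH : 0 < hardyFactor m p s := pos_of_mul_pos_right (by linarith) hD
    have hE := abs_weightedEnergy_sub_le (s := s) hm hc hM hφ
    rw [hnorm, mul_one] at hE
    have hHD : (hardyFactor m p s)⁻¹ ≤ weightedGradEnergy m s φ := by
      rw [inv_le_iff_one_le_mul₀ hH, mul_comm]; linarith
    exact ⟨hH, by linarith [(abs_le.1 hE).1]⟩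
  have hpos : ∀ s, 0 < hardyFactor m p s := fun s =>
    (hlower s _ (rayleighValues_nonempty hm).some_mem).1
  have hinv : Tendsto (fun s => (hardyFactor m p s)⁻¹ - M) atTop atTop := by
    simpa only [sub_eq_add_neg, Function.comp_def] using tendsto_atTop_add_const_right _ (-M)
      (tendsto_inv_nhdsGT_zero.comp
        (tendsto_nhdsWithin_iff.2 ⟨tendsto_hardyFactor hm hp hanti hmono, .of_forall hpos⟩))
  refine tendsto_atTop_mono (fun s => ?_) hinv
  rw [lambdaD_eq_sInf]
  exact le_csInf (rayleighValues_nonempty hm) fun l hl => (hlower s l hl).2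

theorem lambdaD_tendsto_atTop_iff_general
    (m c : ℝ → ℝ) (hm : ContDiff ℝ 2 m) (hc : Continuous c)
    (hsign : ∃ N : ℕ, 0 < N ∧ ∃ t : ℕ → ℝ, t 0 = 0 ∧ t N = 1 ∧
      (∀ k < N, t k < t (k + 1)) ∧
      (∀ k < N, (∀ x ∈ Set.Icc (t k) (t (k + 1)), 0 ≤ deriv m x) ∨
                (∀ x ∈ Set.Icc (t k) (t (k + 1)), deriv m x ≤ 0))) :
    Tendsto (lambdaD m c) Filter.atTop Filter.atTop ↔
      (StrictMonoOn m (Set.Icc (0:ℝ) 1) ∨ StrictAntiOn m (Set.Icc (0:ℝ) 1) ∨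
        ∃ x₀ ∈ Set.Ioo (0:ℝ) 1,
          StrictAntiOn m (Set.Icc (0:ℝ) x₀) ∧ StrictMonoOn m (Set.Icc x₀ 1)) := by
  have hmc := hm.continuous
  rw [strictMonoOn_or_strictAntiOn_or_valley_iff]
  refine ⟨fun htend => ?_, fun ⟨p, hp, hanti, hmono⟩ =>
    tendsto_lambdaD_atTop_of_strictAntiOn_strictMonoOn hmc hc hp hanti hmono⟩
  by_contra hshape
  have hquasi : ¬ ∀ x ∈ Icc (0:ℝ) 1, ∀ y, ∀ z ∈ Icc (0:ℝ) 1, x < y → y < z →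
      m y < max (m x) (m z) :=
    fun h => hshape (exists_strictAntiOn_strictMonoOn_of_lt_max zero_le_one hmc.continuousOn h)
  push Not at hquasi
  obtain ⟨x, hx, y, z, hz, hxy, hyz, hy⟩ := hquasi
  obtain ⟨p, hp, hpmax⟩ := exists_mem_Ioo_isMaxOn hmc.continuousOn hxy hyz hy
  obtain ⟨N, -, t, ht0, htN, -, hsgn⟩ := hsign
  have hpieces := fun k hk =>
    monotoneOn_or_antitoneOn_of_deriv (hm.differentiable two_ne_zero) (hsgn k hk)
  obtain ⟨δ, hδ, hxδ, hδz, hmono, hanti⟩ := exists_monotoneOn_antitoneOn_of_isMaxOn hp hpmax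
    (exists_lt_monotoneOn_or_antitoneOn hpieces (by linarith [hx.1, hp.1])
      (by linarith [hz.2, hp.2]))
    (exists_gt_monotoneOn_or_antitoneOn hpieces (by linarith [hx.1, hp.1])
      (by linarith [hz.2, hp.2]))
  obtain ⟨C, hC⟩ := exists_lambdaD_le_of_peak (c := c) hmc hc hδ (by linarith [hx.1])
    (by linarith [hz.2]) hmono hanti
  obtain ⟨s, hsC, hs⟩ := ((htend.eventually_gt_atTop C).and (eventually_ge_atTop 0)).exists
  exact (hC s hs).not_gt hsC

/-- For `m` nonconstant whose derivative changes sign at most finitely many times,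
the Dirichlet principal eigenvalue `λ₁^𝒟(s)` tends to `∞` as `s → ∞` iff `m` is
strictly increasing, strictly decreasing, or strictly decreasing then strictly
increasing on `[0,1]`. -/
theorem lambdaD_tendsto_atTop_iff
    (m c : ℝ → ℝ) (hm : ContDiff ℝ 2 m) (hc : Continuous c)
    (hnc : ¬ ∀ x ∈ Set.Icc (0:ℝ) 1, m x = m 0)
    (hsign : ∃ N : ℕ, 0 < N ∧ ∃ t : ℕ → ℝ, t 0 = 0 ∧ t N = 1 ∧
      (∀ k < N, t k < t (k + 1)) ∧
      (∀ k < N, (∀ x ∈ Set.Icc (t k) (t (k + 1)), 0 ≤ deriv m x) ∨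
                (∀ x ∈ Set.Icc (t k) (t (k + 1)), deriv m x ≤ 0))) :
    Tendsto (lambdaD m c) Filter.atTop Filter.atTop ↔
      (StrictMonoOn m (Set.Icc (0:ℝ) 1) ∨ StrictAntiOn m (Set.Icc (0:ℝ) 1) ∨
        ∃ x₀ ∈ Set.Ioo (0:ℝ) 1,
          StrictAntiOn m (Set.Icc (0:ℝ) x₀) ∧ StrictMonoOn m (Set.Icc x₀ 1)) :=
  lambdaD_tendsto_atTop_iff_general m c hm hc hsign
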